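/- For every integer n ≥ 2, the subgroup B₁(n) of GL₂(ℤ/nℤ) consisting of upper triangular matrices with top-left entry 1 (i.e., matrices [[1,b],[0,d]] with d a unit) has index φ(n)·ψ(n) in GL₂(ℤ/nℤ), where φ is Euler's totient function and ψ is the Dedekind psi function ψ(n) = n·∏_{p∣n}(1+1/p). -/

import Mathlib

/-- The Dedekind psi function, `ψ(n) = n ∏_{p ∣ n} (1 + 1/p)`,
given by the Dirichlet convolution `ψ = μ² ⋆ Id`. -/
def dedekindPsi (n : ℕ) : ℕ := ∑ d ∈ n.divisors, if Squarefree d then n / d else 0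

/-!
`GL₂(ℤ/nℤ)` acts on column vectors, `B₁(n)` is the stabilizer of `e₁ = (1, 0)`, and the orbit of
`e₁` consists of the vectors whose entries are coprime (generate the unit ideal). By orbit–stabilizer
the index is the number `J(n)` of coprime pairs in `ℤ/nℤ`. The Chinese remainder theorem makes `J`
multiplicative, and `ℤ/p^(k+1)ℤ` is a local ring, so a pair is coprime unless both entries lie in
the maximal ideal, of size `p^k`: `J(p^(k+1)) = p^(2k+2) - p^(2k) = φ(p^(k+1)) ψ(p^(k+1))`.
-/

open ArithmeticFunction MulAction

namespace ArithmeticFunction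

def squarefreeIndicator : ArithmeticFunction ℕ :=
  ⟨fun d => if Squarefree d then 1 else 0, by simp [not_squarefree_zero]⟩

theorem squarefreeIndicator_apply (d : ℕ) :
    squarefreeIndicator d = if Squarefree d then 1 else 0 := rfl

theorem isMultiplicative_squarefreeIndicator : squarefreeIndicator.IsMultiplicative := by
  refine ⟨by simp [squarefreeIndicator_apply], fun {m n} h => ?_⟩
  simp only [squarefreeIndicator_apply, Nat.squarefree_mul h]
  split_ifs <;> simp_all

def totientFun : ArithmeticFunction ℕ := ⟨Nat.totient, Nat.totient_zero⟩

theorem isMultiplicative_totientFun : totientFun.IsMultiplicative :=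
  ⟨Nat.totient_one, Nat.totient_mul⟩

theorem squarefreeIndicator_mul_id_apply (n : ℕ) :
    (squarefreeIndicator * ArithmeticFunction.id) n = dedekindPsi n := by
  rw [mul_apply, dedekindPsi,
    ← Nat.sum_divisorsAntidiagonal (fun d e => if Squarefree d then e else 0)]
  simp [squarefreeIndicator_apply, ite_mul]

end ArithmeticFunction

theorem dedekindPsi_prime_pow_succ {p : ℕ} (hp : p.Prime) (k : ℕ) :
    dedekindPsi (p ^ (k + 1)) = p ^ (k + 1) + p ^ k := by
  have h_not_sq (i : ℕ) : ¬ Squarefree (p ^ (i + 2)) := by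
    simp [Nat.squarefree_pow_iff hp.ne_one]
  rw [dedekindPsi, Nat.sum_divisors_prime_pow hp, Finset.sum_range_succ',
    Finset.sum_range_succ', Finset.sum_eq_zero fun i _ => if_neg (h_not_sq i)]
  simp [hp.squarefree, pow_succ, Nat.mul_div_cancel _ hp.pos, add_comm]

def coprimePairs (R : Type*) [CommSemiring R] : Set (R × R) := {x | IsCoprime x.1 x.2}

section CoprimePairs

variable {R S : Type*} [CommRing R] [CommRing S]

theorem RingEquiv.isCoprime_apply_iff (e : R ≃+* S) {a b : R} :
    IsCoprime (e a) (e b) ↔ IsCoprime a b :=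
  ⟨fun h => by simpa using h.map e.symm.toRingHom, fun h => h.map e.toRingHom⟩

theorem ncard_coprimePairs_congr (e : R ≃+* S) :
    (coprimePairs R).ncard = (coprimePairs S).ncard := by
  have : coprimePairs R = Prod.map e e ⁻¹' coprimePairs S := by
    ext x
    exact e.isCoprime_apply_iff.symm
  rw [this, Set.ncard_preimage_of_injective_subset_range (e.injective.prodMap e.injective)
    fun x _ => e.surjective.prodMap e.surjective x]

theorem Prod.isCoprime_iff {x y : R × S} :
    IsCoprime x y ↔ IsCoprime x.1 y.1 ∧ IsCoprime x.2 y.2 := by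
  refine ⟨fun h => ⟨h.map (RingHom.fst R S), h.map (RingHom.snd R S)⟩, ?_⟩
  rintro ⟨⟨a, b, hab⟩, ⟨c, d, hcd⟩⟩
  exact ⟨(a, c), (b, d), Prod.ext hab hcd⟩

theorem ncard_coprimePairs_prod :
    (coprimePairs (R × S)).ncard = (coprimePairs R).ncard * (coprimePairs S).ncard := by
  have : coprimePairs (R × S) =
      Equiv.prodProdProdComm R S R S ⁻¹' (coprimePairs R ×ˢ coprimePairs S) := by
    ext x
    exact Prod.isCoprime_iff
  rw [this, Set.ncard_preimage_of_injective_subset_range (Equiv.injective _) (by simp),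
    Set.ncard_prod]

theorem IsLocalRing.isCoprime_iff [IsLocalRing R] {a b : R} :
    IsCoprime a b ↔ IsUnit a ∨ IsUnit b := by
  constructor
  · rintro ⟨u, v, h⟩
    exact (IsLocalRing.isUnit_or_isUnit_of_isUnit_add (h ▸ isUnit_one)).imp
      isUnit_of_mul_isUnit_right isUnit_of_mul_isUnit_right
  · rintro (⟨u, rfl⟩ | ⟨u, rfl⟩)
    · exact ⟨↑u⁻¹, 0, by simp⟩
    · exact ⟨0, ↑u⁻¹, by simp⟩

theorem IsLocalRing.coprimePairs_eq [IsLocalRing R] :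
    coprimePairs R = (nonunits R ×ˢ nonunits R)ᶜ := by
  ext x
  simp [coprimePairs, IsLocalRing.isCoprime_iff, mem_nonunits_iff, or_iff_not_and_not]

theorem ncard_nonunits_add_card_units (M : Type*) [Monoid M] [Finite M] :
    (nonunits M).ncard + Nat.card Mˣ = Nat.card M := by
  rw [← Set.ncard_range_of_injective Units.val_injective, add_comm]
  exact Set.ncard_add_ncard_compl _

theorem IsLocalRing.ncard_coprimePairs_add [IsLocalRing R] [Finite R] :
    (coprimePairs R).ncard + (nonunits R).ncard ^ 2 = Nat.card R ^ 2 := by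
  rw [IsLocalRing.coprimePairs_eq, sq, sq, ← Set.ncard_prod, ← Nat.card_prod, add_comm]
  exact Set.ncard_add_ncard_compl _

end CoprimePairs

theorem isLocalRing_zmod_prime_pow_succ (p : ℕ) [Fact p.Prime] (k : ℕ) :
    IsLocalRing (ZMod (p ^ (k + 1))) :=
  have : Nontrivial (ZMod (p ^ (k + 1))) :=
    ZMod.nontrivial_iff.mpr (Nat.one_lt_pow k.succ_ne_zero (Fact.out : p.Prime).one_lt).ne'
  IsLocalRing.of_surjective' (PadicInt.toZModPow (k + 1)) (ZMod.ringHom_surjective _)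

theorem ncard_nonunits_zmod_prime_pow_succ {p : ℕ} (hp : p.Prime) (k : ℕ) :
    (nonunits (ZMod (p ^ (k + 1)))).ncard = p ^ k := by
  have : NeZero (p ^ (k + 1)) := ⟨pow_ne_zero _ hp.ne_zero⟩
  have h := ncard_nonunits_add_card_units (ZMod (p ^ (k + 1)))
  rw [Nat.card_eq_fintype_card (α := (ZMod _)ˣ), ZMod.card_units_eq_totient, Nat.card_zmod,
    Nat.totient_prime_pow_succ hp] at h
  have h_pow : p ^ (k + 1) = p ^ k * (p - 1) + p ^ k := by
    rw [Nat.mul_sub_one, Nat.sub_add_cancel (Nat.le_mul_of_pos_right _ hp.pos), pow_succ]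
  omega

theorem ncard_coprimePairs_int : (coprimePairs ℤ).ncard = 0 :=
  Set.Infinite.ncard <| Set.infinite_of_injective_forall_mem (f := fun k : ℤ => (1, k))
    (fun _ _ h => (Prod.ext_iff.mp h).2) fun _ => isCoprime_one_left

-- `ZMod 0 = ℤ` has infinitely many coprime pairs, so `ncard` vanishes there as it must.
noncomputable def coprimePairCount : ArithmeticFunction ℕ :=
  ⟨fun n => (coprimePairs (ZMod n)).ncard, ncard_coprimePairs_int⟩

theorem coprimePairCount_apply (n : ℕ) : coprimePairCount n = (coprimePairs (ZMod n)).ncard := rfl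

theorem isMultiplicative_coprimePairCount : coprimePairCount.IsMultiplicative := by
  refine ⟨?_, fun {m n} h => ?_⟩
  · have h_univ : coprimePairs (ZMod 1) = Set.univ :=
      Set.eq_univ_of_forall fun _ => ⟨0, 0, Subsingleton.elim _ _⟩
    rw [coprimePairCount_apply, h_univ, Set.ncard_univ, Nat.card_prod, Nat.card_zmod, mul_one]
  · rw [coprimePairCount_apply, ncard_coprimePairs_congr (ZMod.chineseRemainder h),
      ncard_coprimePairs_prod]
    rfl

theorem coprimePairCount_prime_pow_succ {p : ℕ} (hp : p.Prime) (k : ℕ) :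
    coprimePairCount (p ^ (k + 1)) = (p ^ (k + 1)).totient * dedekindPsi (p ^ (k + 1)) := by
  have : Fact p.Prime := ⟨hp⟩
  have := isLocalRing_zmod_prime_pow_succ p k
  have h_count := IsLocalRing.ncard_coprimePairs_add (R := ZMod (p ^ (k + 1)))
  rw [ncard_nonunits_zmod_prime_pow_succ hp, Nat.card_zmod] at h_count
  rw [coprimePairCount_apply, dedekindPsi_prime_pow_succ hp, Nat.totient_prime_pow_succ hp]
  zify [hp.one_le] at h_count ⊢
  linear_combination h_count

theorem coprimePairCount_eq : coprimePairCount = totientFun.pmul (squarefreeIndicator * .id) := by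
  have h_mult := isMultiplicative_totientFun.pmul
    (isMultiplicative_squarefreeIndicator.mul isMultiplicative_id)
  rw [IsMultiplicative.eq_iff_eq_on_prime_powers _ isMultiplicative_coprimePairCount _ h_mult]
  rintro p (_ | k) hp
  · rw [pow_zero, isMultiplicative_coprimePairCount.map_one, h_mult.map_one]
  · rw [coprimePairCount_prime_pow_succ hp, pmul_apply, squarefreeIndicator_mul_id_apply]
    rfl

theorem ncard_coprimePairs_zmod (n : ℕ) :
    (coprimePairs (ZMod n)).ncard = n.totient * dedekindPsi n := by
  rw [← coprimePairCount_apply, coprimePairCount_eq, pmul_apply, squarefreeIndicator_mul_id_apply]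
  rfl

namespace Matrix.GeneralLinearGroup

variable {n R : Type*} [Fintype n] [DecidableEq n] [CommRing R]

instance mulActionPi : MulAction (GL n R) (n → R) where
  smul A v := A.val *ᵥ v
  one_smul v := one_mulVec v
  mul_smul A B v := (mulVec_mulVec v A.val B.val).symm

theorem smul_def (A : GL n R) (v : n → R) : A • v = A.val *ᵥ v := rfl

theorem smul_single_one (A : GL n R) (j : n) : A • Pi.single j 1 = fun i => A i j := by
  rw [smul_def, mulVec_single_one]
  rfl

theorem mem_stabilizer_single_zero_iff (A : GL (Fin 2) R) :
    A ∈ stabilizer (GL (Fin 2) R) (Pi.single 0 1 : Fin 2 → R) ↔ A 0 0 = 1 ∧ A 1 0 = 0 := by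
  rw [mem_stabilizer_iff, smul_single_one, funext_iff, Fin.forall_fin_two]
  simp

theorem isCoprime_col_zero (A : GL (Fin 2) R) : IsCoprime (A 0 0) (A 1 0) := by
  obtain ⟨u, hu⟩ := (isUnit_iff_isUnit_det A.val).mp A.isUnit
  rw [det_fin_two] at hu
  exact ⟨↑u⁻¹ * A 1 1, -(↑u⁻¹ * A 0 1), by linear_combination (↑u⁻¹ : R) * hu.symm + u.inv_mul⟩

theorem orbit_single_zero :
    orbit (GL (Fin 2) R) (Pi.single 0 1 : Fin 2 → R) =
      piFinTwoEquiv (fun _ => R) ⁻¹' coprimePairs R := by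
  ext v
  constructor
  · rintro ⟨A, rfl⟩
    simp only [Set.mem_preimage, smul_single_one]
    exact isCoprime_col_zero A
  · intro hv
    obtain ⟨g, hg0, hg1⟩ := IsCoprime.exists_SL2_col hv 0
    refine ⟨SpecialLinearGroup.toGL g, ?_⟩
    change _ • _ = v
    rw [smul_single_one]
    ext i
    fin_cases i <;> simp [hg0, hg1]

theorem ncard_orbit_single_zero :
    (orbit (GL (Fin 2) R) (Pi.single 0 1 : Fin 2 → R)).ncard = (coprimePairs R).ncard := by
  rw [orbit_single_zero, Set.ncard_preimage_of_injective_subset_range (Equiv.injective _)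
    fun x _ => Equiv.surjective _ x]

end Matrix.GeneralLinearGroup

theorem stmt_2_general (n : ℕ)
    (B : Subgroup (GL (Fin 2) (ZMod n)))
    (hB : ∀ A : GL (Fin 2) (ZMod n),
      A ∈ B ↔ (A : Matrix (Fin 2) (Fin 2) (ZMod n)) 0 0 = 1 ∧
        (A : Matrix (Fin 2) (Fin 2) (ZMod n)) 1 0 = 0) :
    B.index = n.totient * dedekindPsi n := by
  have hB_stabilizer : B = stabilizer (GL (Fin 2) (ZMod n)) (Pi.single 0 1 : Fin 2 → ZMod n) := by
    ext A
    rw [hB, Matrix.GeneralLinearGroup.mem_stabilizer_single_zero_iff]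
  rw [hB_stabilizer, index_stabilizer, Matrix.GeneralLinearGroup.ncard_orbit_single_zero,
    ncard_coprimePairs_zmod]

theorem stmt_2 (n : ℕ) (hn : 2 ≤ n)
    (B : Subgroup (GL (Fin 2) (ZMod n)))
    (hB : ∀ A : GL (Fin 2) (ZMod n),
      A ∈ B ↔ (A : Matrix (Fin 2) (Fin 2) (ZMod n)) 0 0 = 1 ∧
        (A : Matrix (Fin 2) (Fin 2) (ZMod n)) 1 0 = 0) :
    B.index = n.totient * dedekindPsi n :=
  stmt_2_general n B hB
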